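/- Let D be a finite set of Dirichlet characters, 2 ≤ N₁ < N₂ ≤ R real numbers, (a_n) complex numbers with |a_n| ≤ 1, and A = {b/R : 1 ≤ b ≤ R}. Then for any positive integer k, (∑_{χ∈D} max_{α∈[0,1)} |∑_{N₁≤n≤N₂} χ(n)a_n e(αn)/n|^{2k})^{1/(2k)} ≤ (∑_{α∈A} ∑_{χ∈D} |∑_{N₁^k≤n≤N₂^k} χ(n)g(n,α)/n|²)^{1/(2k)} + O(|D|^{1/(2k)} N₂/R), where g(n,α) = ∑_{N₁≤n₁,…,n_k≤N₂, n₁⋯n_k=n} ∏_j a_{n_j} e(α n_j) and e(t) = e^{2πit}. -/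

import Mathlib

open Finset

/-- `e(t) = exp(2πit)`. -/
noncomputable def e (t : ℝ) : ℂ := Complex.exp (2 * Real.pi * Complex.I * t)

/-- The coefficient `g(n,α) = ∑_{N₁≤n₁,…,n_k≤N₂, n₁⋯n_k=n} ∏_j a_{n_j} e(α n_j)`. -/
noncomputable def gCoeff (a : ℕ → ℂ) (N₁ N₂ : ℝ) (k : ℕ) (n : ℕ) (α : ℝ) : ℂ :=
  ∑ v ∈ Fintype.piFinset (fun _ : Fin k => Finset.Icc ⌈N₁⌉₊ ⌊N₂⌋₊),
    if ∏ i, v i = n then ∏ i, (a (v i) * e (α * v i)) else 0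

/-!
Moving `α` to a nearest grid point `b/R` changes each term `χ(n) a_n e(αn)/n` by at most
`2π/R`, so for each character the supremum over `α` exceeds the grid maximum by at most
`2πN₂/R`. Minkowski's inequality in `ℓ^{2k}(D)` splits this error off as
`|D|^{1/2k} · 2πN₂/R`. At the maximising grid point the `k`-th power of the sum is the sum with
coefficients `g(n, b/R)` over `N₁^k ≤ n ≤ N₂^k`, because `n ↦ χ(n)/n` is completely
multiplicative; its square is bounded by the sum over all grid points.
-/

lemma norm_e (t : ℝ) : ‖e t‖ = 1 := by
  rw [e, show 2 * Real.pi * Complex.I * t = ((2 * Real.pi * t : ℝ) : ℂ) * Complex.I by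
    push_cast; ring]
  exact Complex.norm_exp_ofReal_mul_I _

lemma norm_e_sub_e_le (x y : ℝ) : ‖e x - e y‖ ≤ 2 * Real.pi * |x - y| := by
  have h : e x - e y = e y * (Complex.exp (Complex.I * (2 * Real.pi * (x - y) : ℝ)) - 1) := by
    rw [e, e, mul_sub, mul_one, ← Complex.exp_add]
    congr 2
    push_cast
    ring
  rw [h, norm_mul, norm_e, one_mul]
  calc _ ≤ ‖(2 * Real.pi * (x - y) : ℝ)‖ := Real.norm_exp_I_mul_ofReal_sub_one_le
    _ = 2 * Real.pi * |x - y| := by rw [Real.norm_eq_abs, abs_mul, abs_of_pos Real.two_pi_pos]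

lemma norm_sum_mul_e_div_sub_le (s : Finset ℕ) (f : ℕ → ℂ) (hf : ∀ n ∈ s, ‖f n‖ ≤ 1)
    (α β : ℝ) :
    ‖∑ n ∈ s, f n * e (α * n) / n - ∑ n ∈ s, f n * e (β * n) / n‖ ≤
      2 * Real.pi * |α - β| * #s := by
  rw [← sum_sub_distrib]
  calc _ ≤ ∑ n ∈ s, ‖f n * e (α * n) / n - f n * e (β * n) / n‖ := norm_sum_le _ _
    _ ≤ ∑ _n ∈ s, 2 * Real.pi * |α - β| := sum_le_sum fun n hn ↦ ?_
    _ = 2 * Real.pi * |α - β| * #s := by rw [sum_const, nsmul_eq_mul, mul_comm]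
  rw [← sub_div, ← mul_sub, norm_div, norm_mul, Complex.norm_natCast]
  rcases n.eq_zero_or_pos with rfl | hn0
  · simp only [CharP.cast_eq_zero, div_zero]
    positivity
  rw [div_le_iff₀ (by positivity)]
  calc ‖f n‖ * ‖e (α * n) - e (β * n)‖ ≤ 1 * (2 * Real.pi * |α * n - β * n|) :=
        mul_le_mul (hf n hn) (norm_e_sub_e_le _ _) (norm_nonneg _) zero_le_one
    _ = 2 * Real.pi * |α - β| * n := by rw [← sub_mul, abs_mul, Nat.abs_cast]; ring

lemma card_Icc_ceil_floor_le {x y : ℝ} (hx : 0 < x) (hy : 0 ≤ y) :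
    (#(Icc ⌈x⌉₊ ⌊y⌋₊) : ℝ) ≤ y := by
  have : 1 ≤ ⌈x⌉₊ := Nat.one_le_ceil_iff.2 hx
  rw [Nat.card_Icc]
  calc ((⌊y⌋₊ + 1 - ⌈x⌉₊ : ℕ) : ℝ) ≤ ⌊y⌋₊ := by exact_mod_cast (by omega)
    _ ≤ y := Nat.floor_le hy

lemma exists_mem_Icc_abs_sub_div_le {R α : ℝ} (hR : 1 ≤ R) (hα : α ∈ Set.Icc (0 : ℝ) 1) :
    ∃ b ∈ Icc 1 ⌊R⌋₊, |α - b / R| ≤ 1 / R := by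
  have hR0 : 0 < R := by linarith
  set b := min (⌊α * R⌋₊ + 1) ⌊R⌋₊ with hb
  refine ⟨b, mem_Icc.2 ⟨le_min (by omega) (Nat.le_floor (by simpa using hR)), min_le_right _ _⟩, ?_⟩
  rw [show α - b / R = (α * R - b) / R by field_simp, abs_div, abs_of_pos hR0,
    div_le_div_iff_of_pos_right hR0, abs_sub_le_iff, hb, Nat.cast_min]
  have h₁ := Nat.floor_le (mul_nonneg hα.1 hR0.le)
  have h₂ := Nat.lt_floor_add_one (α * R)
  have h₃ := Nat.lt_floor_add_one R
  have h₄ : α * R ≤ R := by nlinarith [hα.2]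
  push_cast
  constructor
  · have := le_min (show α * R - 1 ≤ ⌊α * R⌋₊ + 1 by linarith) (show α * R - 1 ≤ ⌊R⌋₊ by linarith)
    linarith
  · linarith [min_le_left ((⌊α * R⌋₊ : ℝ) + 1) ⌊R⌋₊]

lemma exists_grid_iSup_norm_le {E : Type*} [SeminormedAddGroup E] (f : ℝ → E) {R L : ℝ}
    (hR : 1 ≤ R) (hL : 0 ≤ L) (hf : ∀ α β, |α - β| ≤ 1 / R → ‖f α - f β‖ ≤ L) :
    ∃ b ∈ Icc 1 ⌊R⌋₊, ⨆ α : Set.Ico (0 : ℝ) 1, ‖f α‖ ≤ ‖f (b / R)‖ + L := by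
  obtain ⟨b, hb, hmax⟩ := (Icc 1 ⌊R⌋₊).exists_max_image (fun b : ℕ ↦ ‖f (b / R)‖)
    ⟨1, mem_Icc.2 ⟨le_rfl, Nat.le_floor (by simpa using hR)⟩⟩
  refine ⟨b, hb, Real.iSup_le (fun α ↦ ?_) (by positivity)⟩
  obtain ⟨b', hb', hclose⟩ := exists_mem_Icc_abs_sub_div_le hR (Set.Ico_subset_Icc_self α.2)
  calc ‖f α‖ ≤ ‖f (b' / R)‖ + ‖f α - f (b' / R)‖ := norm_le_norm_add_norm_sub' _ _
    _ ≤ ‖f (b / R)‖ + L := add_le_add (hmax b' hb') (hf _ _ hclose)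

lemma sum_mul_pow_eq_sum_mul_sum_prod_eq {R : Type*} [CommSemiring R] (w : ℕ →* R)
    (c : ℕ → R) (s t : Finset ℕ) (k : ℕ)
    (hst : ∀ v ∈ Fintype.piFinset fun _ : Fin k ↦ s, ∏ i, v i ∈ t) :
    (∑ n ∈ s, w n * c n) ^ k =
      ∑ m ∈ t, w m * ∑ v ∈ Fintype.piFinset (fun _ : Fin k ↦ s),
        if ∏ i, v i = m then ∏ i, c (v i) else 0 := by
  rw [← Fin.prod_const, prod_univ_sum]
  simp only [mul_sum, mul_ite, mul_zero]
  rw [sum_comm]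
  refine sum_congr rfl fun v hv ↦ ?_
  rw [sum_ite_eq, if_pos (hst v hv), prod_mul_distrib, map_prod]

lemma prod_mem_Icc_ceil_pow_floor_pow {x y : ℝ} (hx : 0 ≤ x) (hy : 0 ≤ y) {k : ℕ}
    {v : Fin k → ℕ} (hv : v ∈ Fintype.piFinset fun _ ↦ Icc ⌈x⌉₊ ⌊y⌋₊) :
    ∏ i, v i ∈ Icc ⌈x ^ k⌉₊ ⌊y ^ k⌋₊ := by
  simp only [Fintype.mem_piFinset, mem_Icc, Nat.ceil_le, Nat.le_floor_iff hy] at hv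
  rw [mem_Icc, Nat.ceil_le, Nat.le_floor_iff (pow_nonneg hy k), Nat.cast_prod,
    ← Fin.prod_const, ← Fin.prod_const]
  exact ⟨prod_le_prod (fun _ _ ↦ hx) fun i _ ↦ (hv i).1,
    prod_le_prod (fun i _ ↦ Nat.cast_nonneg _) fun i _ ↦ (hv i).2⟩

noncomputable def charSum {q : ℕ} (χ : DirichletCharacter ℂ q) (a : ℕ → ℂ) (N₁ N₂ α : ℝ) : ℂ :=
  ∑ n ∈ Icc ⌈N₁⌉₊ ⌊N₂⌋₊, χ n * a n * e (α * n) / n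

lemma norm_charSum_sub_le {q : ℕ} (χ : DirichletCharacter ℂ q) {a : ℕ → ℂ} (ha : ∀ n, ‖a n‖ ≤ 1)
    {N₁ N₂ : ℝ} (h₁ : 0 < N₁) (h₂ : 0 ≤ N₂) (α β : ℝ) :
    ‖charSum χ a N₁ N₂ α - charSum χ a N₁ N₂ β‖ ≤ 2 * Real.pi * |α - β| * N₂ := by
  refine (norm_sum_mul_e_div_sub_le _ (fun n ↦ χ n * a n) (fun n _ ↦ ?_) α β).trans ?_
  · rw [norm_mul]
    exact mul_le_one₀ (χ.norm_le_one n) (norm_nonneg _) (ha n)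
  · gcongr
    exact card_Icc_ceil_floor_le h₁ h₂

lemma charSum_pow {q : ℕ} (χ : DirichletCharacter ℂ q) (a : ℕ → ℂ) {N₁ N₂ : ℝ}
    (h₁ : 0 ≤ N₁) (h₂ : 0 ≤ N₂) (k : ℕ) (β : ℝ) :
    charSum χ a N₁ N₂ β ^ k = ∑ n ∈ Icc ⌈N₁ ^ k⌉₊ ⌊N₂ ^ k⌋₊, χ n * gCoeff a N₁ N₂ k n β / n := by
  let w : ℕ →* ℂ := χ.toMonoidHom.comp (Nat.castRingHom (ZMod q)).toMonoidHom *
    invMonoidHom.comp (Nat.castRingHom ℂ).toMonoidHom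
  have hw (n : ℕ) : w n = χ n / n := (div_eq_mul_inv _ _).symm
  calc charSum χ a N₁ N₂ β ^ k = (∑ n ∈ Icc ⌈N₁⌉₊ ⌊N₂⌋₊, w n * (a n * e (β * n))) ^ k := by
        rw [charSum]
        congr 1
        refine sum_congr rfl fun n _ ↦ ?_
        rw [hw]
        ring
    _ = _ := sum_mul_pow_eq_sum_mul_sum_prod_eq w _ _ _ k fun v hv ↦
        prod_mem_Icc_ceil_pow_floor_pow h₁ h₂ hv
    _ = _ := sum_congr rfl fun n _ ↦ by rw [hw, gCoeff]; ring

lemma Lp_add_const_le {ι : Type*} (s : Finset ι) {f : ι → ℝ} (hf : ∀ i ∈ s, 0 ≤ f i) {c : ℝ}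
    (hc : 0 ≤ c) {p : ℕ} (hp : 1 ≤ p) :
    (∑ i ∈ s, (f i + c) ^ p) ^ (1 / (p : ℝ)) ≤
      (∑ i ∈ s, f i ^ p) ^ (1 / (p : ℝ)) + (#s : ℝ) ^ (1 / (p : ℝ)) * c := by
  have h := Real.Lp_add_le_of_nonneg s (p := p) (g := fun _ ↦ c) (by exact_mod_cast hp) hf
    fun _ _ ↦ hc
  simp only [Real.rpow_natCast] at h
  convert h using 2
  rw [sum_const, nsmul_eq_mul, Real.mul_rpow (by positivity) (by positivity),
    ← Real.rpow_natCast c, ← Real.rpow_mul hc, mul_one_div_cancel (by positivity), Real.rpow_one]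

lemma sum_apply_le_sum_sum {ι κ M : Type*} [AddCommMonoid M] [PartialOrder M]
    [IsOrderedAddMonoid M] (s : Finset ι) (t : Finset κ) (f : ι → κ → M)
    (hf : ∀ i ∈ s, ∀ j ∈ t, 0 ≤ f i j) {b : ι → κ} (hb : ∀ i ∈ s, b i ∈ t) :
    ∑ i ∈ s, f i (b i) ≤ ∑ j ∈ t, ∑ i ∈ s, f i j := by
  rw [sum_comm]
  exact sum_le_sum fun i hi ↦ single_le_sum (hf i hi) (hb i hi)

/-- Discretization of the maximum over `α ∈ [0,1)` of character sums to the grid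
`A = {b/R : 1 ≤ b ≤ R}`, at the cost of an error `O(|D|^{1/2k} N₂/R)`. -/
theorem stmt_8 :
    ∃ C > 0, ∀ (q : ℕ) (D : Finset (DirichletCharacter ℂ q))
      (N₁ N₂ R : ℝ) (a : ℕ → ℂ) (k : ℕ),
      2 ≤ N₁ → N₁ < N₂ → N₂ ≤ R → (∀ n, ‖a n‖ ≤ 1) → 0 < k →
      (∑ χ ∈ D, (⨆ α : Set.Ico (0 : ℝ) 1,
          ‖∑ n ∈ Finset.Icc ⌈N₁⌉₊ ⌊N₂⌋₊, χ n * a n * e ((α : ℝ) * n) / n‖) ^ (2 * k))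
        ^ ((1 : ℝ) / (2 * k)) ≤
      (∑ b ∈ Finset.Icc 1 ⌊R⌋₊, ∑ χ ∈ D,
          ‖∑ n ∈ Finset.Icc ⌈N₁ ^ k⌉₊ ⌊N₂ ^ k⌋₊,
            χ n * gCoeff a N₁ N₂ k n ((b : ℝ) / R) / n‖ ^ 2)
        ^ ((1 : ℝ) / (2 * k)) +
      C * (D.card : ℝ) ^ ((1 : ℝ) / (2 * k)) * N₂ / R := by
  refine ⟨2 * Real.pi, Real.two_pi_pos, fun q D N₁ N₂ R a k hN₁ h₁₂ h₂R ha hk ↦ ?_⟩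
  have hN₂ : 0 ≤ N₂ := by linarith
  have hR : 1 ≤ R := by linarith
  set c := 2 * Real.pi * N₂ / R with hc
  have hlip (χ : DirichletCharacter ℂ q) (α β : ℝ) (h : |α - β| ≤ 1 / R) :
      ‖charSum χ a N₁ N₂ α - charSum χ a N₁ N₂ β‖ ≤ c :=
    calc _ ≤ 2 * Real.pi * |α - β| * N₂ := norm_charSum_sub_le χ ha (by linarith) hN₂ α β
      _ ≤ 2 * Real.pi * (1 / R) * N₂ := by gcongr
      _ = c := by ring
  choose b hb hsup using fun χ ↦
    exists_grid_iSup_norm_le (charSum χ a N₁ N₂) hR (by positivity) (hlip χ)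
  have hMinkowski := Lp_add_const_le D (f := fun χ ↦ ‖charSum χ a N₁ N₂ (b χ / R)‖)
    (fun _ _ ↦ norm_nonneg _) (by positivity : 0 ≤ c) (by omega : 1 ≤ 2 * k)
  push_cast at hMinkowski
  have hgrid : ∑ χ ∈ D, ‖charSum χ a N₁ N₂ (b χ / R)‖ ^ (2 * k) ≤
      ∑ β ∈ Icc 1 ⌊R⌋₊, ∑ χ ∈ D,
        ‖∑ n ∈ Icc ⌈N₁ ^ k⌉₊ ⌊N₂ ^ k⌋₊, χ n * gCoeff a N₁ N₂ k n ((β : ℝ) / R) / n‖ ^ 2 := by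
    refine le_of_eq_of_le (sum_congr rfl fun χ _ ↦ ?_)
      (sum_apply_le_sum_sum _ _ _ (fun _ _ _ _ ↦ by positivity) fun χ _ ↦ hb χ)
    rw [pow_mul', ← norm_pow, charSum_pow χ a (by linarith) hN₂]
  have hsup₀ (χ : DirichletCharacter ℂ q) : 0 ≤ ⨆ α : Set.Ico (0 : ℝ) 1, ‖charSum χ a N₁ N₂ α‖ :=
    Real.iSup_nonneg fun _ ↦ norm_nonneg _
  calc _ ≤ (∑ χ ∈ D, (‖charSum χ a N₁ N₂ (b χ / R)‖ + c) ^ (2 * k)) ^ ((1 : ℝ) / (2 * k)) := by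
        gcongr with χ
        · exact sum_nonneg fun χ _ ↦ pow_nonneg (hsup₀ χ) _
        · exact hsup₀ χ
        · exact hsup χ
    _ ≤ _ := hMinkowski
    _ ≤ _ := add_le_add (Real.rpow_le_rpow (by positivity) hgrid (by positivity))
        (le_of_eq <| by rw [hc]; ring)
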